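/- arXiv:1703.00182 — 5 statements merged into one kernel-verified Lean document; each statement's English description precedes it below -/
import Mathlib

section
/- If A and B are square matrices with disjoint spectra, F11 = exp(A), F22 = exp(B), and X is the unique solution of the Sylvester equation A X − X B = F11 C − C F22, then exp([[A, C],[0, B]]) = [[F11, X],[0, F22]]. -/
/-!
Write `M = [[A, C], [0, B]]`. Reading the exponential series blockwise, `exp M` is again block
upper triangular with diagonal blocks `exp A` and `exp B`; comparing the `(1, 2)` blocks of
`M * exp M = exp M * M` shows that its corner `Y` satisfies `A Y - Y B = exp A C - C exp B`.
The Sylvester operator `Z ↦ A Z - Z B` is injective when `σ(A) ∩ σ(B) = ∅`: from `A Z = Z B`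
we get `χ_B(A) Z = Z χ_B(B) = 0` by Cayley–Hamilton, and `χ_B(A)` is invertible because by
spectral mapping its spectrum is `χ_B(σ(A))`, which avoids `0`. Hence `Y = X`.
-/

open Matrix NormedSpace Polynomial

namespace Matrix

section Sylvester

variable {m n K : Type*} [Fintype m] [Fintype n] [DecidableEq m] [DecidableEq n]

theorem pow_mul_eq_mul_pow_of_mul_eq_mul [CommSemiring K] {A : Matrix m m K} {B : Matrix n n K}
    {Z : Matrix m n K} (h : A * Z = Z * B) (k : ℕ) : A ^ k * Z = Z * B ^ k := by
  induction k with
  | zero => simp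
  | succ k ih => rw [pow_succ, pow_succ, Matrix.mul_assoc, h, ← Matrix.mul_assoc, ih,
      Matrix.mul_assoc]

theorem aeval_mul_eq_mul_aeval_of_mul_eq_mul [CommSemiring K] {A : Matrix m m K}
    {B : Matrix n n K} {Z : Matrix m n K} (h : A * Z = Z * B) (p : K[X]) :
    aeval A p * Z = Z * aeval B p := by
  induction p using Polynomial.induction_on' with
  | add p q hp hq => rw [map_add, map_add, Matrix.add_mul, Matrix.mul_add, hp, hq]
  | monomial k c =>
    rw [aeval_monomial, aeval_monomial, ← Algebra.smul_def, ← Algebra.smul_def,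
      Matrix.smul_mul, Matrix.mul_smul, pow_mul_eq_mul_pow_of_mul_eq_mul h k]

theorem eq_zero_of_mul_eq_mul_of_disjoint_spectrum [Field K] [IsAlgClosed K]
    {A : Matrix m m K} {B : Matrix n n K} {Z : Matrix m n K}
    (hAB : Disjoint (spectrum K A) (spectrum K B)) (h : A * Z = Z * B) : Z = 0 := by
  rcases isEmpty_or_nonempty n with _ | _
  · exact Subsingleton.elim _ _
  set P := aeval A B.charpoly
  have hPZ : P * Z = 0 := by
    rw [aeval_mul_eq_mul_aeval_of_mul_eq_mul h, aeval_self_charpoly, Matrix.mul_zero]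
  have hP : IsUnit P := by
    have hdeg : 0 < B.charpoly.degree := by
      rw [charpoly_degree_eq_dim]
      exact_mod_cast Fintype.card_pos
    rw [← spectrum.zero_notMem_iff K, spectrum.map_polynomial_aeval_of_degree_pos A _ hdeg]
    rintro ⟨μ, hμA, hμ⟩
    exact hAB.ne_of_mem hμA (mem_spectrum_iff_isRoot_charpoly.mpr hμ) rfl
  calc Z = (P⁻¹ * P) * Z := by
        rw [nonsing_inv_mul _ ((isUnit_iff_isUnit_det P).mp hP), Matrix.one_mul]
    _ = 0 := by rw [Matrix.mul_assoc, hPZ, Matrix.mul_zero]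

theorem sylvester_injective [Field K] [IsAlgClosed K] {A : Matrix m m K} {B : Matrix n n K}
    (hAB : Disjoint (spectrum K A) (spectrum K B)) :
    Function.Injective fun X : Matrix m n K => A * X - X * B := by
  intro X Y h
  refine sub_eq_zero.mp (eq_zero_of_mul_eq_mul_of_disjoint_spectrum hAB ?_)
  rw [Matrix.mul_sub, Matrix.sub_mul]
  exact sub_eq_sub_iff_sub_eq_sub.mp h

end Sylvester

section BlockTriangular

variable {ι l m n o R : Type*}

section HasSum

variable [AddCommMonoid R] [TopologicalSpace R] {f : ι → Matrix (n ⊕ o) (l ⊕ m) R}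
  {a : Matrix (n ⊕ o) (l ⊕ m) R}

theorem HasSum.matrix_toBlocks₁₁ (hf : HasSum f a) :
    HasSum (fun x => (f x).toBlocks₁₁) a.toBlocks₁₁ :=
  hf.map (⟨⟨toBlocks₁₁, rfl⟩, fun _ _ => rfl⟩ : _ →+ _) (continuous_id.matrix_submatrix _ _)

theorem HasSum.matrix_toBlocks₂₁ (hf : HasSum f a) :
    HasSum (fun x => (f x).toBlocks₂₁) a.toBlocks₂₁ :=
  hf.map (⟨⟨toBlocks₂₁, rfl⟩, fun _ _ => rfl⟩ : _ →+ _) (continuous_id.matrix_submatrix _ _)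

theorem HasSum.matrix_toBlocks₂₂ (hf : HasSum f a) :
    HasSum (fun x => (f x).toBlocks₂₂) a.toBlocks₂₂ :=
  hf.map (⟨⟨toBlocks₂₂, rfl⟩, fun _ _ => rfl⟩ : _ →+ _) (continuous_id.matrix_submatrix _ _)

end HasSum

variable [Fintype m] [Fintype n] [DecidableEq m] [DecidableEq n]

theorem fromBlocks_zero₂₁_pow [Semiring R] (A : Matrix m m R) (B : Matrix n n R)
    (C : Matrix m n R) (k : ℕ) :
    ∃ D, fromBlocks A C 0 B ^ k = fromBlocks (A ^ k) D 0 (B ^ k) := by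
  induction k with
  | zero => exact ⟨0, by simp [fromBlocks_one]⟩
  | succ k ih =>
    obtain ⟨D, hD⟩ := ih
    exact ⟨A ^ k * C + D * B, by simp [pow_succ, hD, fromBlocks_multiply]⟩

open scoped Norms.Operator in
theorem exp_fromBlocks_zero₂₁ (A : Matrix m m ℂ) (B : Matrix n n ℂ) (C : Matrix m n ℂ) :
    ∃ Y, exp (fromBlocks A C 0 B) = fromBlocks (exp A) Y 0 (exp B) := by
  choose D hD using fromBlocks_zero₂₁_pow A B C
  have hS := exp_series_hasSum_exp' (𝕂 := ℂ) (fromBlocks A C 0 B)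
  simp only [hD, fromBlocks_smul, smul_zero] at hS
  have h₁₁ : (exp (fromBlocks A C 0 B)).toBlocks₁₁ = exp A :=
    hS.matrix_toBlocks₁₁.unique (exp_series_hasSum_exp' (𝕂 := ℂ) A)
  have h₂₁ : (exp (fromBlocks A C 0 B)).toBlocks₂₁ = 0 := hS.matrix_toBlocks₂₁.unique hasSum_zero
  have h₂₂ : (exp (fromBlocks A C 0 B)).toBlocks₂₂ = exp B :=
    hS.matrix_toBlocks₂₂.unique (exp_series_hasSum_exp' (𝕂 := ℂ) B)
  refine ⟨(exp (fromBlocks A C 0 B)).toBlocks₁₂, ?_⟩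
  conv_lhs => rw [← fromBlocks_toBlocks (exp (fromBlocks A C 0 B)), h₁₁, h₂₁, h₂₂]

theorem sylvester_of_exp_fromBlocks_eq [CommRing R] [TopologicalSpace R] [IsTopologicalRing R]
    [T2Space R] [Algebra ℚ R] {A : Matrix m m R} {B : Matrix n n R} {C Y : Matrix m n R}
    (h : exp (fromBlocks A C 0 B) = fromBlocks (exp A) Y 0 (exp B)) :
    A * Y - Y * B = exp A * C - C * exp B := by
  have hcomm := congrArg toBlocks₁₂ (Commute.refl (fromBlocks A C 0 B)).exp_right.eq
  simp only [h, fromBlocks_multiply, toBlocks_fromBlocks₁₂, Matrix.mul_zero, Matrix.zero_mul,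
    add_zero, zero_add] at hcomm
  exact sub_eq_sub_iff_add_eq_add.mpr hcomm

end BlockTriangular

end Matrix

/-- Parlett-type recurrence: if `A` and `B` have disjoint spectra and `X` solves the
Sylvester equation `A X - X B = exp A · C - C · exp B`, then
`exp [[A, C], [0, B]] = [[exp A, X], [0, exp B]]`. -/
theorem stmt_8 (m n : ℕ) (A : Matrix (Fin m) (Fin m) ℂ) (B : Matrix (Fin n) (Fin n) ℂ)
    (C X : Matrix (Fin m) (Fin n) ℂ)
    (hspec : Disjoint (spectrum ℂ A) (spectrum ℂ B))
    (hX : A * X - X * B = exp A * C - C * exp B) :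
    exp (fromBlocks A C 0 B) = fromBlocks (exp A) X 0 (exp B) := by
  obtain ⟨Y, hY⟩ := exp_fromBlocks_zero₂₁ A B C
  rw [hY, sylvester_injective hspec ((sylvester_of_exp_fromBlocks_eq hY).trans hX.symm)]
end

section
/- The (1,2) block of exp([[A, C],[0, B]]) equals the integral ∫_0^1 exp(sA) C exp((1−s)B) ds. -/
/-!
Write `M = [[A, C], [0, B]]`. Since `M` is block upper triangular, the upper-left block `Y s` of
`exp (s • M)` satisfies `Y' = Y * A`, `Y 0 = 1`, hence equals `exp (s • A)`. The upper-right block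
`P s` satisfies `P' = exp (s • A) * C + P * B`, so `Φ s = P s * exp ((1 - s) • B)` has derivative
`exp (s • A) * C * exp ((1 - s) • B)`, the two `P * B * exp ((1 - s) • B)` terms cancelling.
The integral is therefore `Φ 1 - Φ 0 = (exp M).toBlocks₁₂`.
-/

open Matrix NormedSpace

theorem eq_mul_exp_smul_of_hasDerivAt {𝕂 𝔸 : Type*} [RCLike 𝕂] [NormedRing 𝔸]
    [NormedAlgebra 𝕂 𝔸] [CompleteSpace 𝔸] {X : 𝕂 → 𝔸} {a : 𝔸}
    (hX : ∀ t, HasDerivAt X (X t * a) t) (t : 𝕂) :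
    X t = X 0 * exp (t • a) := by
  have hY : ∀ u, HasDerivAt (fun u => X u * exp (u • -a)) 0 u := fun u => by
    convert (hX u).fun_mul (hasDerivAt_exp_smul_const' (-a) u) using 1
    simp [mul_assoc]
  have hconst : X t * exp (t • -a) = X 0 * exp ((0 : 𝕂) • -a) :=
    is_const_of_deriv_eq_zero (fun u => (hY u).differentiableAt) (fun u => (hY u).deriv) t 0
  have hinv : exp (t • -a) * exp (t • a) = 1 := by
    let +nondep : NormedAlgebra ℚ 𝔸 := .restrictScalars ℚ 𝕂 𝔸
    rw [← NormedSpace.exp_add_of_commute ((Commute.refl a).neg_left.smul_left t |>.smul_right t),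
      smul_neg, neg_add_cancel, exp_zero]
  calc X t = X t * exp (t • -a) * exp (t • a) := by rw [mul_assoc, hinv, mul_one]
    _ = X 0 * exp (t • a) := by rw [hconst, zero_smul, exp_zero, mul_one]

namespace Matrix

section Blocks

variable {α : Type*} {l m n o p q : Type*}

theorem toBlocks₁₁_one [Zero α] [One α] [DecidableEq l] [DecidableEq m] :
    (1 : Matrix (l ⊕ m) (l ⊕ m) α).toBlocks₁₁ = 1 := by
  rw [← fromBlocks_one, toBlocks_fromBlocks₁₁]

theorem toBlocks₁₂_one [Zero α] [One α] [DecidableEq l] [DecidableEq m] :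
    (1 : Matrix (l ⊕ m) (l ⊕ m) α).toBlocks₁₂ = 0 := by
  rw [← fromBlocks_one, toBlocks_fromBlocks₁₂]

variable [Fintype n] [Fintype o] [NonUnitalNonAssocSemiring α]

theorem toBlocks₁₁_mul_fromBlocks (X : Matrix (l ⊕ m) (n ⊕ o) α) (A : Matrix n p α)
    (B : Matrix n q α) (C : Matrix o p α) (D : Matrix o q α) :
    (X * fromBlocks A B C D).toBlocks₁₁ = X.toBlocks₁₁ * A + X.toBlocks₁₂ * C := by
  rw [← fromBlocks_toBlocks X, fromBlocks_multiply]
  simp only [toBlocks_fromBlocks₁₁, toBlocks_fromBlocks₁₂]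

theorem toBlocks₁₂_mul_fromBlocks (X : Matrix (l ⊕ m) (n ⊕ o) α) (A : Matrix n p α)
    (B : Matrix n q α) (C : Matrix o p α) (D : Matrix o q α) :
    (X * fromBlocks A B C D).toBlocks₁₂ = X.toBlocks₁₁ * B + X.toBlocks₁₂ * D := by
  rw [← fromBlocks_toBlocks X, fromBlocks_multiply]
  simp only [toBlocks_fromBlocks₁₁, toBlocks_fromBlocks₁₂]

end Blocks

section Calculus

variable {𝕜 : Type*} [NontriviallyNormedField 𝕜] {l m n o : Type*}

theorem hasDerivAt_iff [Fintype n] {f : 𝕜 → Matrix m n 𝕜} {f' : Matrix m n 𝕜} {t : 𝕜} :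
    HasDerivAt f f' t ↔ ∀ i j, HasDerivAt (fun t => f t i j) (f' i j) t :=
  hasDerivAt_pi.trans (forall_congr' fun _ => hasDerivAt_pi)

theorem _root_.HasDerivAt.matrix_mul [Fintype m] [Fintype n] {f : 𝕜 → Matrix l m 𝕜} {g : 𝕜 → Matrix m n 𝕜}
    {f' : Matrix l m 𝕜} {g' : Matrix m n 𝕜} {t : 𝕜}
    (hf : HasDerivAt f f' t) (hg : HasDerivAt g g' t) :
    HasDerivAt (fun t => f t * g t) (f' * g t + f t * g') t := by
  rw [hasDerivAt_iff] at hf hg ⊢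
  intro i j
  simp only [mul_apply, add_apply, ← Finset.sum_add_distrib]
  exact HasDerivAt.fun_sum fun k _ => (hf i k).mul (hg k j)

theorem _root_.HasDerivAt.matrix_toBlocks₁₁ [Fintype n] [Fintype o] {f : 𝕜 → Matrix (l ⊕ m) (n ⊕ o) 𝕜}
    {f' : Matrix (l ⊕ m) (n ⊕ o) 𝕜} {t : 𝕜} (hf : HasDerivAt f f' t) :
    HasDerivAt (fun t => (f t).toBlocks₁₁) f'.toBlocks₁₁ t := by
  rw [hasDerivAt_iff] at hf ⊢
  exact fun i j => hf (.inl i) (.inl j)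

theorem _root_.HasDerivAt.matrix_toBlocks₁₂ [Fintype n] [Fintype o] {f : 𝕜 → Matrix (l ⊕ m) (n ⊕ o) 𝕜}
    {f' : Matrix (l ⊕ m) (n ⊕ o) 𝕜} {t : 𝕜} (hf : HasDerivAt f f' t) :
    HasDerivAt (fun t => (f t).toBlocks₁₂) f'.toBlocks₁₂ t := by
  rw [hasDerivAt_iff] at hf ⊢
  exact fun i j => hf (.inl i) (.inr j)

end Calculus

section Exponential

variable {𝕂 : Type*} [RCLike 𝕂] {m n : Type*} [Fintype m] [DecidableEq m] [Fintype n]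
  [DecidableEq n]

-- `Matrix` has no global Banach-algebra norm, but `HasDerivAt` depends only on the topology,
-- so the Banach-algebra lemmas apply through the operator norm.
theorem hasDerivAt_exp_smul (M : Matrix m m 𝕂) (t : 𝕂) :
    HasDerivAt (fun u : 𝕂 => exp (u • M)) (exp (t • M) * M) t :=
  open scoped Norms.Operator in hasDerivAt_exp_smul_const M t

theorem hasDerivAt_exp_smul' (M : Matrix m m 𝕂) (t : 𝕂) :
    HasDerivAt (fun u : 𝕂 => exp (u • M)) (M * exp (t • M)) t :=
  open scoped Norms.Operator in hasDerivAt_exp_smul_const' M t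

theorem toBlocks₁₁_exp_fromBlocks_zero₂₁ (A : Matrix m m 𝕂) (B : Matrix n n 𝕂)
    (C : Matrix m n 𝕂) : (exp (fromBlocks A C 0 B)).toBlocks₁₁ = exp A := by
  set M := fromBlocks A C 0 B
  have hY : ∀ t : 𝕂, HasDerivAt (fun t : 𝕂 => (exp (t • M)).toBlocks₁₁)
      ((exp (t • M)).toBlocks₁₁ * A) t := fun t => by
    convert (hasDerivAt_exp_smul M t).matrix_toBlocks₁₁ using 1
    rw [toBlocks₁₁_mul_fromBlocks, Matrix.mul_zero, add_zero]
  have h := open scoped Norms.Operator in eq_mul_exp_smul_of_hasDerivAt hY 1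
  simp only [M, one_smul, zero_smul, exp_zero, toBlocks₁₁_one, one_mul] at h
  exact h

end Exponential

end Matrix

attribute [local instance] Matrix.normedAddCommGroup Matrix.normedSpace

/-- The (1,2) block of `exp [[A, C], [0, B]]` equals `∫_0^1 exp(sA) C exp((1-s)B) ds`. -/
theorem stmt_9 (m n : ℕ) (A : Matrix (Fin m) (Fin m) ℝ) (B : Matrix (Fin n) (Fin n) ℝ)
    (C : Matrix (Fin m) (Fin n) ℝ) :
    (exp (fromBlocks A C 0 B)).toBlocks₁₂ =
      ∫ s in (0 : ℝ)..1, exp (s • A) * C * exp ((1 - s) • B) := by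
  set M := fromBlocks A C 0 B
  have hE : ∀ s : ℝ, HasDerivAt (fun s : ℝ => exp ((1 - s) • B))
      ((-1 : ℝ) • (B * exp ((1 - s) • B))) s :=
    fun s => (hasDerivAt_exp_smul' B (1 - s)).scomp s ((hasDerivAt_id s).const_sub 1)
  have hΦ : ∀ s : ℝ, HasDerivAt (fun s : ℝ => (exp (s • M)).toBlocks₁₂ * exp ((1 - s) • B))
      (exp (s • A) * C * exp ((1 - s) • B)) s := fun s => by
    have h₁₁ : (exp (s • M)).toBlocks₁₁ = exp (s • A) := by
      rw [← toBlocks₁₁_exp_fromBlocks_zero₂₁ (s • A) (s • B) (s • C), fromBlocks_smul, smul_zero]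
    convert ((hasDerivAt_exp_smul M s).matrix_toBlocks₁₂).matrix_mul (hE s) using 1
    rw [toBlocks₁₂_mul_fromBlocks, h₁₁, neg_one_smul, Matrix.mul_neg, Matrix.add_mul,
      Matrix.mul_assoc _ B, add_neg_cancel_right]
  have hcont : Continuous fun s : ℝ => exp (s • A) * C * exp ((1 - s) • B) :=
    continuous_iff_continuousAt.2 fun s =>
      (((hasDerivAt_exp_smul A s).matrix_mul (hasDerivAt_const s C)).matrix_mul (hE s)).continuousAt
  rw [intervalIntegral.integral_eq_sub_of_hasDerivAt (fun s _ => hΦ s) (hcont.intervalIntegrable 0 1)]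
  simp [toBlocks₁₂_one]
end

section
/- For the Jacobi model generator 𝒢 acting on y^p v^q, the 1-norm of the coordinate vector of 𝒢(y^p v^q) in the monomial basis is bounded by p·r + q·κ(θ+1) + p²/2 + 2pq|ρ|α + q(q−1)σα, where α = σ(1 + v_min v_max + v_max + v_min)/(2(√v_max − √v_min)²). -/
/-- Helper: `|a + c * ρ| ≤ a + c * |ρ|` when `a, c ≥ 0`. -/
lemma abs_affine_le (a c ρ : ℝ) (ha : 0 ≤ a) (hc : 0 ≤ c) :
    |a + c * ρ| ≤ a + c * |ρ| := by
  have h1 := mul_le_mul_of_nonneg_left (le_abs_self ρ) hc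
  have h2 := mul_le_mul_of_nonneg_left (neg_abs_le ρ) hc
  rw [abs_le]
  constructor <;> nlinarith [abs_nonneg ρ]

/-- Helper: `0 ≤ n * (n - 1)` for a natural number cast to `ℝ`. -/
lemma nat_mul_pred_nonneg (n : ℕ) : 0 ≤ (n : ℝ) * ((n : ℝ) - 1) := by
  rcases Nat.eq_zero_or_pos n with h | h
  · simp [h]
  · have h1 : (1 : ℝ) ≤ (n : ℝ) := by exact_mod_cast h
    nlinarith

/-- In the Jacobi model, the 1-norm of the coordinate vector of `𝒢(y^p v^q)` (i.e. the
sum of absolute values of the seven coefficients appearing in the expansion of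
`𝒢(y^p v^q)` in the monomial basis) is bounded by
`p r + q κ (θ + 1) + p²/2 + 2 p q |ρ| α + q (q - 1) σ α`. -/
theorem stmt_12 (κ θ σ r ρ vmin vmax : ℝ)
    (hκ : 0 ≤ κ) (hθ : θ ∈ Set.Icc vmin vmax) (hσ : 0 < σ) (hr : 0 ≤ r)
    (hρ : ρ ∈ Set.Icc (-1 : ℝ) 1) (hvmin : 0 ≤ vmin) (hv : vmin < vmax)
    (S α : ℝ)
    (hS : S = (Real.sqrt vmax - Real.sqrt vmin) ^ 2)
    (hα : α = σ * (1 + vmin * vmax + vmax + vmin) / (2 * (Real.sqrt vmax - Real.sqrt vmin) ^ 2))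
    (p q : ℕ) :
    |(p : ℝ) * ((p : ℝ) - 1) / 2| +
      |(p : ℝ) * (1 / 2 + (q : ℝ) * ρ * σ / S)| +
      |(p : ℝ) * (r + (q : ℝ) * ρ * σ * (vmax + vmin) / S)| +
      |(p : ℝ) * (q : ℝ) * ρ * σ * vmax * vmin / S| +
      |(q : ℝ) * (κ + ((q : ℝ) - 1) / 2 * σ ^ 2 / S)| +
      |(q : ℝ) * ((q : ℝ) - 1) / 2 * σ ^ 2 * vmax * vmin / S| +
      |(q : ℝ) * (κ * θ + ((q : ℝ) - 1) / 2 * σ ^ 2 * (vmax + vmin) / S)| ≤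
      (p : ℝ) * r + (q : ℝ) * κ * (θ + 1) + (p : ℝ) ^ 2 / 2 +
        2 * (p : ℝ) * (q : ℝ) * |ρ| * α + (q : ℝ) * ((q : ℝ) - 1) * σ * α := by
  have hsqrt : Real.sqrt vmin < Real.sqrt vmax := Real.sqrt_lt_sqrt hvmin hv
  have hSpos : 0 < S := by rw [hS]; exact pow_pos (sub_pos.2 hsqrt) 2
  have hvM : 0 ≤ vmax := hvmin.trans hv.le
  have hθ0 : 0 ≤ θ := le_trans hvmin hθ.1
  have hP : (0 : ℝ) ≤ (p : ℝ) := Nat.cast_nonneg p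
  have hQ : (0 : ℝ) ≤ (q : ℝ) := Nat.cast_nonneg q
  have hPP := nat_mul_pred_nonneg p
  have hQQ := nat_mul_pred_nonneg q
  -- term 1
  have h1 : |(p : ℝ) * ((p : ℝ) - 1) / 2| = (p : ℝ) * ((p : ℝ) - 1) / 2 :=
    abs_of_nonneg (by linarith)
  -- term 2
  have e2 : (p : ℝ) * (1 / 2 + (q : ℝ) * ρ * σ / S)
      = (p : ℝ) / 2 + ((p : ℝ) * (q : ℝ) * σ / S) * ρ := by ring
  have h2 : |(p : ℝ) * (1 / 2 + (q : ℝ) * ρ * σ / S)|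
      ≤ (p : ℝ) / 2 + ((p : ℝ) * (q : ℝ) * σ / S) * |ρ| := by
    rw [e2]; exact abs_affine_le _ _ _ (by positivity) (by positivity)
  -- term 3
  have e3 : (p : ℝ) * (r + (q : ℝ) * ρ * σ * (vmax + vmin) / S)
      = (p : ℝ) * r + ((p : ℝ) * (q : ℝ) * σ * (vmax + vmin) / S) * ρ := by ring
  have h3 : |(p : ℝ) * (r + (q : ℝ) * ρ * σ * (vmax + vmin) / S)|
      ≤ (p : ℝ) * r + ((p : ℝ) * (q : ℝ) * σ * (vmax + vmin) / S) * |ρ| := by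
    rw [e3]; exact abs_affine_le _ _ _ (by positivity) (by positivity)
  -- term 4
  have e4 : (p : ℝ) * (q : ℝ) * ρ * σ * vmax * vmin / S
      = 0 + ((p : ℝ) * (q : ℝ) * σ * vmax * vmin / S) * ρ := by ring
  have h4 : |(p : ℝ) * (q : ℝ) * ρ * σ * vmax * vmin / S|
      ≤ 0 + ((p : ℝ) * (q : ℝ) * σ * vmax * vmin / S) * |ρ| := by
    rw [e4]; exact abs_affine_le _ _ _ le_rfl (by positivity)
  -- term 5
  have h5 : |(q : ℝ) * (κ + ((q : ℝ) - 1) / 2 * σ ^ 2 / S)|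
      ≤ (q : ℝ) * κ + (q : ℝ) * ((q : ℝ) - 1) / 2 * σ ^ 2 / S := by
    have e5 : (q : ℝ) * (κ + ((q : ℝ) - 1) / 2 * σ ^ 2 / S)
        = ((q : ℝ) * κ + (q : ℝ) * ((q : ℝ) - 1) / 2 * σ ^ 2 / S) + 0 * ρ := by ring
    have hn : 0 ≤ (q : ℝ) * κ + (q : ℝ) * ((q : ℝ) - 1) / 2 * σ ^ 2 / S := by
      have : 0 ≤ (q : ℝ) * ((q : ℝ) - 1) / 2 * σ ^ 2 / S := by positivity
      have : 0 ≤ (q : ℝ) * κ := mul_nonneg hQ hκ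
      linarith [show (0:ℝ) ≤ (q : ℝ) * ((q : ℝ) - 1) / 2 * σ ^ 2 / S by positivity]
    calc |(q : ℝ) * (κ + ((q : ℝ) - 1) / 2 * σ ^ 2 / S)|
        ≤ ((q : ℝ) * κ + (q : ℝ) * ((q : ℝ) - 1) / 2 * σ ^ 2 / S) + 0 * |ρ| := by
          rw [e5]; exact abs_affine_le _ _ _ hn le_rfl
      _ = (q : ℝ) * κ + (q : ℝ) * ((q : ℝ) - 1) / 2 * σ ^ 2 / S := by ring
  -- term 6
  have h6 : |(q : ℝ) * ((q : ℝ) - 1) / 2 * σ ^ 2 * vmax * vmin / S|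
      = (q : ℝ) * ((q : ℝ) - 1) / 2 * σ ^ 2 * vmax * vmin / S :=
    abs_of_nonneg (by positivity)
  -- term 7
  have h7 : |(q : ℝ) * (κ * θ + ((q : ℝ) - 1) / 2 * σ ^ 2 * (vmax + vmin) / S)|
      ≤ (q : ℝ) * κ * θ + (q : ℝ) * ((q : ℝ) - 1) / 2 * σ ^ 2 * (vmax + vmin) / S := by
    have e7 : (q : ℝ) * (κ * θ + ((q : ℝ) - 1) / 2 * σ ^ 2 * (vmax + vmin) / S)
        = ((q : ℝ) * κ * θ + (q : ℝ) * ((q : ℝ) - 1) / 2 * σ ^ 2 * (vmax + vmin) / S) + 0 * ρ := by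
      ring
    have hn : 0 ≤ (q : ℝ) * κ * θ + (q : ℝ) * ((q : ℝ) - 1) / 2 * σ ^ 2 * (vmax + vmin) / S := by
      have hA : 0 ≤ (q : ℝ) * κ * θ := mul_nonneg (mul_nonneg hQ hκ) hθ0
      have hB : 0 ≤ (q : ℝ) * ((q : ℝ) - 1) / 2 * σ ^ 2 * (vmax + vmin) / S := by positivity
      linarith
    calc |(q : ℝ) * (κ * θ + ((q : ℝ) - 1) / 2 * σ ^ 2 * (vmax + vmin) / S)|
        ≤ ((q : ℝ) * κ * θ + (q : ℝ) * ((q : ℝ) - 1) / 2 * σ ^ 2 * (vmax + vmin) / S) + 0 * |ρ| := by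
          rw [e7]; exact abs_affine_le _ _ _ hn le_rfl
      _ = (q : ℝ) * κ * θ + (q : ℝ) * ((q : ℝ) - 1) / 2 * σ ^ 2 * (vmax + vmin) / S := by ring
  -- the sum of the upper bounds equals the right-hand side
  have hSne : S ≠ 0 := ne_of_gt hSpos
  have hαS : α = σ * (1 + vmin * vmax + vmax + vmin) / (2 * S) := by rw [hα, hS]
  have hsum : ((p : ℝ) * ((p : ℝ) - 1) / 2)
      + ((p : ℝ) / 2 + ((p : ℝ) * (q : ℝ) * σ / S) * |ρ|)
      + ((p : ℝ) * r + ((p : ℝ) * (q : ℝ) * σ * (vmax + vmin) / S) * |ρ|)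
      + (0 + ((p : ℝ) * (q : ℝ) * σ * vmax * vmin / S) * |ρ|)
      + ((q : ℝ) * κ + (q : ℝ) * ((q : ℝ) - 1) / 2 * σ ^ 2 / S)
      + ((q : ℝ) * ((q : ℝ) - 1) / 2 * σ ^ 2 * vmax * vmin / S)
      + ((q : ℝ) * κ * θ + (q : ℝ) * ((q : ℝ) - 1) / 2 * σ ^ 2 * (vmax + vmin) / S)
      = (p : ℝ) * r + (q : ℝ) * κ * (θ + 1) + (p : ℝ) ^ 2 / 2 +
        2 * (p : ℝ) * (q : ℝ) * |ρ| * α + (q : ℝ) * ((q : ℝ) - 1) * σ * α := by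
    rw [hαS]
    field_simp
    ring
  linarith [h1, h2, h3, h4, h5, h6, h7]
end

section
/- The matrix 1-norm of the matrix representation G_n of the Jacobi generator on Pol_n(ℝ²) in the monomial basis is bounded by n(r + κ + κθ − σα) + (1/2)n²(1 + |ρ|α + 2σα), where α = σ(1 + v_min v_max + v_max + v_min)/(2(√v_max − √v_min)²). -/
open MvPolynomial Finsupp

lemma jac_fadd (a b a' b' : ℕ) : (single (0:Fin 2) a + single 1 b) + (single 0 a' + single 1 b')
    = single 0 (a+a') + single 1 (b+b') := by
  ext x; fin_cases x <;> simp [Finsupp.single_apply]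
lemma jac_fsub0 (a b : ℕ) : (single (0:Fin 2) a + single 1 b) - single 0 1
    = single 0 (a-1) + single 1 b := by
  ext x; fin_cases x <;> simp [Finsupp.single_apply]
lemma jac_fsub1 (a b : ℕ) : (single (0:Fin 2) a + single 1 b) - single 1 1
    = single 0 a + single 1 (b-1) := by
  ext x; fin_cases x <;> simp [Finsupp.single_apply]
lemma jac_fapp0 (a b : ℕ) : ((single (0:Fin 2) a + single 1 b) : Fin 2 →₀ ℕ) (0:Fin 2) = a := by
  simp [Finsupp.single_apply]
lemma jac_fapp1 (a b : ℕ) : ((single (0:Fin 2) a + single 1 b) : Fin 2 →₀ ℕ) (1:Fin 2) = b := by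
  simp [Finsupp.single_apply]

noncomputable def Mjac (a b : ℕ) (c : ℝ) : MvPolynomial (Fin 2) ℝ :=
  monomial (single 0 a + single 1 b) c

lemma Mjac_mul (a b a' b' : ℕ) (c c' : ℝ) :
    Mjac a b c * Mjac a' b' c' = Mjac (a+a') (b+b') (c*c') := by
  rw [Mjac, Mjac, Mjac, monomial_mul, jac_fadd]

lemma jac_X0_eq (m : ℕ) : (X 0 ^ m : MvPolynomial (Fin 2) ℝ) = Mjac m 0 1 := by
  rw [X_pow_eq_monomial, Mjac, Finsupp.single_zero, add_zero]
lemma jac_X1_eq (k : ℕ) : (X 1 ^ k : MvPolynomial (Fin 2) ℝ) = Mjac 0 k 1 := by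
  rw [X_pow_eq_monomial, Mjac, Finsupp.single_zero, zero_add]
lemma jac_C_eq (c : ℝ) : (C c : MvPolynomial (Fin 2) ℝ) = Mjac 0 0 c := by
  rw [C_apply, Mjac, Finsupp.single_zero, Finsupp.single_zero, add_zero]

lemma jac_pd0 (a b : ℕ) (c : ℝ) : pderiv (0 : Fin 2) (Mjac a b c) = Mjac (a-1) b (c * a) := by
  rw [Mjac, pderiv_monomial, jac_fsub0, jac_fapp0, Mjac]
lemma jac_pd1 (a b : ℕ) (c : ℝ) : pderiv (1 : Fin 2) (Mjac a b c) = Mjac a (b-1) (c * b) := by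
  rw [Mjac, pderiv_monomial, jac_fsub1, jac_fapp1, Mjac]

lemma Mjac_eq_prod (a b : ℕ) (c : ℝ) :
    Mjac a b c = C c * X 0 ^ a * X 1 ^ b := by
  rw [jac_X0_eq, jac_X1_eq, jac_C_eq, Mjac_mul, Mjac_mul]
  simp

lemma Mjac_eval (x : Fin 2 → ℝ) (a b : ℕ) (c : ℝ) :
    eval x (Mjac a b c) = c * x 0 ^ a * x 1 ^ b := by
  rw [Mjac_eq_prod]; simp

lemma jac_col_add {I : Type*} [Fintype I] (e : I → (Fin 2 →₀ ℕ))
    {p q : MvPolynomial (Fin 2) ℝ} {Bp Bq : ℝ}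
    (hp : ∑ i, |coeff (e i) p| ≤ Bp) (hq : ∑ i, |coeff (e i) q| ≤ Bq) :
    ∑ i, |coeff (e i) (p + q)| ≤ Bp + Bq := by
  calc ∑ i, |coeff (e i) (p + q)| ≤ ∑ i, (|coeff (e i) p| + |coeff (e i) q|) :=
        Finset.sum_le_sum fun i _ => by rw [coeff_add]; exact abs_add_le _ _
    _ = ∑ i, |coeff (e i) p| + ∑ i, |coeff (e i) q| := Finset.sum_add_distrib
    _ ≤ Bp + Bq := add_le_add hp hq

lemma jac_col_M {I : Type*} [Fintype I] {e : I → (Fin 2 →₀ ℕ)} (he : Function.Injective e)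
    {a b : ℕ} {c B : ℝ} (hB : |c| ≤ B) :
    ∑ i, |coeff (e i) (Mjac a b c)| ≤ B := by
  refine le_trans ?_ hB
  calc ∑ i, |coeff (e i) (Mjac a b c)|
      = ∑ i ∈ Finset.univ.filter (fun i => (single (0:Fin 2) a + single 1 b) = e i), |c| := by
        rw [Finset.sum_filter]
        exact Finset.sum_congr rfl fun i _ => by
          rw [Mjac, coeff_monomial, apply_ite abs, abs_zero]
    _ ≤ |c| := by
        rw [Finset.sum_const, nsmul_eq_mul]
        have hcard : (Finset.univ.filter
            (fun i => (single (0:Fin 2) a + single 1 b) = e i)).card ≤ 1 :=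
          Finset.card_le_one.2 fun x hx y hy =>
            he ((Finset.mem_filter.1 hx).2.symm.trans (Finset.mem_filter.1 hy).2)
        calc ((Finset.univ.filter
              (fun i => (single (0:Fin 2) a + single 1 b) = e i)).card : ℝ) * |c|
            ≤ 1 * |c| := by
              exact mul_le_mul_of_nonneg_right (by exact_mod_cast hcard) (abs_nonneg c)
          _ = |c| := one_mul _

set_option maxHeartbeats 1600000 in
/-- Norm estimate for the Jacobi model: the matrix 1-norm (maximum absolute column sum) of
the matrix representation `G_n` of the Jacobi generator on `Pol_n(ℝ²)` in the monomial
basis is bounded by `n(r + κ + κθ - σα) + (1/2) n² (1 + |ρ|α + 2σα)`. -/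
theorem stmt_14 (n : ℕ) (κ θ σ r ρ vmin vmax : ℝ)
    (hκ : 0 ≤ κ) (hθ : θ ∈ Set.Icc vmin vmax) (hσ : 0 < σ) (hr : 0 ≤ r)
    (hρ : ρ ∈ Set.Icc (-1 : ℝ) 1) (hvmin : 0 ≤ vmin) (hv : vmin < vmax)
    (S α : ℝ)
    (hS : S = (Real.sqrt vmax - Real.sqrt vmin) ^ 2)
    (hα : α = σ * (1 + vmin * vmax + vmax + vmin) / (2 * S))
    (Qp : MvPolynomial (Fin 2) ℝ)
    (hQp : Qp = C (1 / S) * ((X 1 - C vmin) * (C vmax - X 1)))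
    (Amat : Fin 2 → Fin 2 → MvPolynomial (Fin 2) ℝ)
    (hAmat : Amat = ![![X 1, C (ρ * σ) * Qp], ![C (ρ * σ) * Qp, C (σ ^ 2) * Qp]])
    (bvec : Fin 2 → MvPolynomial (Fin 2) ℝ)
    (hbvec : bvec = ![C r - C (1 / 2 : ℝ) * X 1, C κ * (C θ - X 1)])
    (𝒢 : MvPolynomial (Fin 2) ℝ → MvPolynomial (Fin 2) ℝ)
    (h𝒢 : ∀ f, 𝒢 f =
      C (1 / 2 : ℝ) * ∑ i, ∑ j, Amat i j * pderiv i (pderiv j f) +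
        ∑ i, bvec i * pderiv i f)
    (Gmat : {k : Fin (n + 1) × Fin (n + 1) // (k.1 : ℕ) + (k.2 : ℕ) ≤ n} →
      {k : Fin (n + 1) × Fin (n + 1) // (k.1 : ℕ) + (k.2 : ℕ) ≤ n} → ℝ)
    (hGmat : ∀ i j, Gmat i j =
      coeff (Finsupp.single (0 : Fin 2) (i.1.1 : ℕ) + Finsupp.single (1 : Fin 2) (i.1.2 : ℕ))
        (𝒢 (X 0 ^ (j.1.1 : ℕ) * X 1 ^ (j.1.2 : ℕ)))) :
    ∀ j, ∑ i, |Gmat i j| ≤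
      (n : ℝ) * (r + κ + κ * θ - σ * α) +
        (1 / 2) * (n : ℝ) ^ 2 * (1 + |ρ| * α + 2 * σ * α) := by
  intro j
  -- basic positivity facts
  have hvmax0 : 0 < vmax := lt_of_le_of_lt hvmin hv
  have hS0 : 0 < S := by
    rw [hS]
    have h1 : Real.sqrt vmin < Real.sqrt vmax := Real.sqrt_lt_sqrt hvmin hv
    exact pow_pos (sub_pos.2 h1) 2
  have hθ0 : 0 ≤ θ := le_trans hvmin hθ.1
  have hα0 : 0 ≤ α := by
    rw [hα]
    have h1 : 0 ≤ vmin * vmax := mul_nonneg hvmin hvmax0.le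
    have h2 : (0:ℝ) ≤ σ * (1 + vmin * vmax + vmax + vmin) := by nlinarith
    exact div_nonneg h2 (by linarith)
  set m : ℕ := (j.1.1 : ℕ) with hm_def
  set k : ℕ := (j.1.2 : ℕ) with hk_def
  -- the explicit form of 𝒢 applied to the monomial
  have hT : 𝒢 (X 0 ^ m * X 1 ^ k) =
      Mjac (m-1-1) (k+1) ((m:ℝ)*((m-1 : ℕ):ℝ)/2)
    + Mjac (m-1) (k-1+2) (-(ρ*σ*(m:ℝ)*(k:ℝ)/S))
    + Mjac (m-1) (k-1+1) (ρ*σ*(vmin+vmax)*(m:ℝ)*(k:ℝ)/S)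
    + Mjac (m-1) (k-1) (-(ρ*σ*(vmin*vmax)*(m:ℝ)*(k:ℝ)/S))
    + Mjac m (k-1-1+2) (-(σ^2*(k:ℝ)*((k-1:ℕ):ℝ)/(2*S)))
    + Mjac m (k-1-1+1) (σ^2*(vmin+vmax)*(k:ℝ)*((k-1:ℕ):ℝ)/(2*S))
    + Mjac m (k-1-1) (-(σ^2*(vmin*vmax)*(k:ℝ)*((k-1:ℕ):ℝ)/(2*S)))
    + Mjac (m-1) k (r*(m:ℝ))
    + Mjac (m-1) (k+1) (-((m:ℝ)/2))
    + Mjac m (k-1) (κ*θ*(k:ℝ))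
    + Mjac m (k-1+1) (-(κ*(k:ℝ))) := by
    rw [h𝒢, hAmat, hbvec, hQp, Fin.sum_univ_two, Fin.sum_univ_two, Fin.sum_univ_two,
      Fin.sum_univ_two]
    simp only [Matrix.cons_val', Matrix.cons_val_zero, Matrix.cons_val_one, Matrix.head_cons,
      Matrix.empty_val', Matrix.cons_val_fin_one, Matrix.head_fin_const]
    rw [jac_X0_eq, jac_X1_eq, Mjac_mul]
    simp only [Nat.add_zero, Nat.zero_add, mul_one]
    simp only [jac_pd0, jac_pd1]
    refine MvPolynomial.funext fun x => ?_
    simp only [map_add, map_mul, map_sub, eval_C, eval_X, Mjac_eval]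
    ring
  -- the exponent map and its injectivity
  set e : {k : Fin (n + 1) × Fin (n + 1) // (k.1 : ℕ) + (k.2 : ℕ) ≤ n} → (Fin 2 →₀ ℕ) :=
    fun i => Finsupp.single (0 : Fin 2) (i.1.1 : ℕ) + Finsupp.single (1 : Fin 2) (i.1.2 : ℕ)
    with he_def
  have he : Function.Injective e := by
    intro x y hxy
    have h0 : (x.1.1 : ℕ) = (y.1.1 : ℕ) := by
      have := congrArg (fun s : Fin 2 →₀ ℕ => s 0) hxy
      simpa [he_def, Finsupp.single_apply] using this
    have h1 : (x.1.2 : ℕ) = (y.1.2 : ℕ) := by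
      have := congrArg (fun s : Fin 2 →₀ ℕ => s 1) hxy
      simpa [he_def, Finsupp.single_apply] using this
    exact Subtype.ext (Prod.ext (Fin.val_injective h0) (Fin.val_injective h1))
  have h1 : ∑ i, |Gmat i j| = ∑ i, |coeff (e i) (𝒢 (X 0 ^ m * X 1 ^ k))| :=
    Finset.sum_congr rfl fun i _ => by rw [hGmat]
  rw [h1, hT]
  -- bound the column sum by the sum of absolute coefficients
  have hmn : ((m:ℝ) + (k:ℝ)) ≤ (n:ℝ) := by exact_mod_cast j.2
  have hm0 : (0:ℝ) ≤ (m:ℝ) := Nat.cast_nonneg m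
  have hk0 : (0:ℝ) ≤ (k:ℝ) := Nat.cast_nonneg k
  have hvv : 0 ≤ vmin * vmax := mul_nonneg hvmin hvmax0.le
  have hvs : 0 ≤ vmin + vmax := by linarith
  have hk1 : (0:ℝ) ≤ ((k-1:ℕ):ℝ) := Nat.cast_nonneg _
  have h2S : (0:ℝ) ≤ 2*S := by linarith
  have hσ2 : (0:ℝ) ≤ σ^2 := sq_nonneg σ
  have b1 : ∑ i, |coeff (e i) (Mjac (m-1-1) (k+1) ((m:ℝ)*((m-1 : ℕ):ℝ)/2))| ≤
      (m:ℝ)*((m-1:ℕ):ℝ)/2 :=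
    jac_col_M he (by rw [abs_of_nonneg (by positivity)])
  have b2 : ∑ i, |coeff (e i) (Mjac (m-1) (k-1+2) (-(ρ*σ*(m:ℝ)*(k:ℝ)/S)))| ≤
      |ρ| * (σ*(m:ℝ)*(k:ℝ)/S) :=
    jac_col_M he (by
      rw [abs_neg, show ρ*σ*(m:ℝ)*(k:ℝ)/S = ρ*(σ*(m:ℝ)*(k:ℝ)/S) by ring, abs_mul,
        abs_of_nonneg (div_nonneg (by positivity) hS0.le)])
  have b3 : ∑ i, |coeff (e i) (Mjac (m-1) (k-1+1) (ρ*σ*(vmin+vmax)*(m:ℝ)*(k:ℝ)/S))| ≤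
      |ρ| * (σ*(vmin+vmax)*(m:ℝ)*(k:ℝ)/S) :=
    jac_col_M he (by
      rw [show ρ*σ*(vmin+vmax)*(m:ℝ)*(k:ℝ)/S = ρ*(σ*(vmin+vmax)*(m:ℝ)*(k:ℝ)/S) by ring,
        abs_mul, abs_of_nonneg (div_nonneg
          (mul_nonneg (mul_nonneg (mul_nonneg hσ.le hvs) hm0) hk0) hS0.le)])
  have b4 : ∑ i, |coeff (e i) (Mjac (m-1) (k-1) (-(ρ*σ*(vmin*vmax)*(m:ℝ)*(k:ℝ)/S)))| ≤
      |ρ| * (σ*(vmin*vmax)*(m:ℝ)*(k:ℝ)/S) :=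
    jac_col_M he (by
      rw [abs_neg, show ρ*σ*(vmin*vmax)*(m:ℝ)*(k:ℝ)/S = ρ*(σ*(vmin*vmax)*(m:ℝ)*(k:ℝ)/S) by ring,
        abs_mul, abs_of_nonneg (div_nonneg
          (mul_nonneg (mul_nonneg (mul_nonneg hσ.le hvv) hm0) hk0) hS0.le)])
  have b5 : ∑ i, |coeff (e i) (Mjac m (k-1-1+2) (-(σ^2*(k:ℝ)*((k-1:ℕ):ℝ)/(2*S))))| ≤
      σ^2*(k:ℝ)*((k-1:ℕ):ℝ)/(2*S) :=
    jac_col_M he (by rw [abs_neg, abs_of_nonneg (div_nonneg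
      (mul_nonneg (mul_nonneg hσ2 hk0) hk1) h2S)])
  have b6 : ∑ i, |coeff (e i) (Mjac m (k-1-1+1) (σ^2*(vmin+vmax)*(k:ℝ)*((k-1:ℕ):ℝ)/(2*S)))| ≤
      σ^2*(vmin+vmax)*(k:ℝ)*((k-1:ℕ):ℝ)/(2*S) :=
    jac_col_M he (by rw [abs_of_nonneg (div_nonneg
      (mul_nonneg (mul_nonneg (mul_nonneg hσ2 hvs) hk0) hk1) h2S)])
  have b7 : ∑ i, |coeff (e i) (Mjac m (k-1-1) (-(σ^2*(vmin*vmax)*(k:ℝ)*((k-1:ℕ):ℝ)/(2*S))))| ≤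
      σ^2*(vmin*vmax)*(k:ℝ)*((k-1:ℕ):ℝ)/(2*S) :=
    jac_col_M he (by rw [abs_neg, abs_of_nonneg (div_nonneg
      (mul_nonneg (mul_nonneg (mul_nonneg hσ2 hvv) hk0) hk1) h2S)])
  have b8 : ∑ i, |coeff (e i) (Mjac (m-1) k (r*(m:ℝ)))| ≤ r*(m:ℝ) :=
    jac_col_M he (by rw [abs_of_nonneg (mul_nonneg hr hm0)])
  have b9 : ∑ i, |coeff (e i) (Mjac (m-1) (k+1) (-((m:ℝ)/2)))| ≤ (m:ℝ)/2 :=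
    jac_col_M he (by rw [abs_neg, abs_of_nonneg (by positivity)])
  have b10 : ∑ i, |coeff (e i) (Mjac m (k-1) (κ*θ*(k:ℝ)))| ≤ κ*θ*(k:ℝ) :=
    jac_col_M he (by rw [abs_of_nonneg (mul_nonneg (mul_nonneg hκ hθ0) hk0)])
  have b11 : ∑ i, |coeff (e i) (Mjac m (k-1+1) (-(κ*(k:ℝ))))| ≤ κ*(k:ℝ) :=
    jac_col_M he (by rw [abs_neg, abs_of_nonneg (mul_nonneg hκ hk0)])
  have hcol := jac_col_add e (jac_col_add e (jac_col_add e (jac_col_add e (jac_col_add e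
    (jac_col_add e (jac_col_add e (jac_col_add e (jac_col_add e (jac_col_add e b1 b2) b3)
    b4) b5) b6) b7) b8) b9) b10) b11
  refine hcol.trans ?_
  -- final arithmetic
  have key : σ*(1+vmin*vmax+vmax+vmin)/S = 2*α := by
    rw [hα]; field_simp
  have e1 : |ρ| * (σ*(m:ℝ)*(k:ℝ)/S) + |ρ| * (σ*(vmin+vmax)*(m:ℝ)*(k:ℝ)/S)
      + |ρ| * (σ*(vmin*vmax)*(m:ℝ)*(k:ℝ)/S) = 2 * |ρ| * α * ((m:ℝ)*(k:ℝ)) := by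
    linear_combination (|ρ| * (m:ℝ) * (k:ℝ)) * key
  have e2 : σ^2*(k:ℝ)*((k-1:ℕ):ℝ)/(2*S) + σ^2*(vmin+vmax)*(k:ℝ)*((k-1:ℕ):ℝ)/(2*S)
      + σ^2*(vmin*vmax)*(k:ℝ)*((k-1:ℕ):ℝ)/(2*S) = σ * α * ((k:ℝ)*((k-1:ℕ):ℝ)) := by
    linear_combination ((σ * (k:ℝ) * ((k-1:ℕ):ℝ))/2) * key
  have hMN : (m:ℝ) ≤ (n:ℝ) := by linarith
  have hKN : (k:ℝ) ≤ (n:ℝ) := by linarith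
  have f1 : (m:ℝ)*((m-1:ℕ):ℝ) + (m:ℝ) ≤ (n:ℝ)^2 := by
    rcases Nat.eq_zero_or_pos m with h|h
    · simp [h]
    · rw [Nat.cast_pred h]
      nlinarith [mul_self_le_mul_self hm0 hMN]
  have f2 : (k:ℝ)*((k-1:ℕ):ℝ) ≤ (n:ℝ)^2 - (n:ℝ) := by
    rcases Nat.eq_zero_or_pos k with h|h
    · have h2 : n ≤ n^2 := Nat.le_self_pow two_ne_zero n
      have h3 : (n:ℝ) ≤ (n:ℝ)^2 := by exact_mod_cast h2
      simp [h]; linarith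
    · rw [Nat.cast_pred h]
      have h1 : (1:ℝ) ≤ (k:ℝ) := by exact_mod_cast h
      nlinarith [mul_nonneg (sub_nonneg.2 hKN) (show (0:ℝ) ≤ (n:ℝ)+(k:ℝ)-1 by linarith)]
  have f3 : 4*((m:ℝ)*(k:ℝ)) ≤ (n:ℝ)^2 := by
    nlinarith [mul_self_le_mul_self (show (0:ℝ) ≤ (m:ℝ)+(k:ℝ) by linarith) hmn,
      sq_nonneg ((m:ℝ)-(k:ℝ))]
  have g1 : σ*α*((k:ℝ)*((k-1:ℕ):ℝ)) ≤ σ*α*((n:ℝ)^2-(n:ℝ)) :=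
    mul_le_mul_of_nonneg_left f2 (mul_nonneg hσ.le hα0)
  have g2 : |ρ| * α * (4*((m:ℝ)*(k:ℝ))) ≤ |ρ| * α * (n:ℝ)^2 :=
    mul_le_mul_of_nonneg_left f3 (mul_nonneg (abs_nonneg ρ) hα0)
  have g3 : r*(m:ℝ) ≤ r*(n:ℝ) := mul_le_mul_of_nonneg_left hMN hr
  have g4 : κ*(k:ℝ) ≤ κ*(n:ℝ) := mul_le_mul_of_nonneg_left hKN hκ
  have g5 : κ*θ*(k:ℝ) ≤ κ*θ*(n:ℝ) := mul_le_mul_of_nonneg_left hKN (mul_nonneg hκ hθ0)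
  linarith [e1, e2, g1, g2, g3, g4, g5, f1]
end

section
/- The matrix 1-norm of the matrix representation G_n of the Heston generator on Pol_n(ℝ²) in the monomial basis is bounded by n(r + κ + κθ − σ²/2) + (1/2)n²(1 + |ρ|σ/2 + σ²). -/
open MvPolynomial

private lemma colsum_add {ι : Type*} [Fintype ι] (m : ι → (Fin 2 →₀ ℕ))
    (P Q : MvPolynomial (Fin 2) ℝ) :
    ∑ i, |coeff (m i) (P + Q)| ≤ (∑ i, |coeff (m i) P|) + ∑ i, |coeff (m i) Q| := by
  rw [← Finset.sum_add_distrib]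
  exact Finset.sum_le_sum fun i _ => by rw [coeff_add]; exact abs_add_le _ _

private lemma colsum_sub {ι : Type*} [Fintype ι] (m : ι → (Fin 2 →₀ ℕ))
    (P Q : MvPolynomial (Fin 2) ℝ) :
    ∑ i, |coeff (m i) (P - Q)| ≤ (∑ i, |coeff (m i) P|) + ∑ i, |coeff (m i) Q| := by
  rw [← Finset.sum_add_distrib]
  exact Finset.sum_le_sum fun i _ => by rw [coeff_sub]; exact abs_sub _ _

private lemma colsum_monomial {ι : Type*} [Fintype ι] [DecidableEq ι]
    (m : ι → (Fin 2 →₀ ℕ)) (hm : Function.Injective m) (s : Fin 2 →₀ ℕ) (c : ℝ) :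
    ∑ i, |coeff (m i) (monomial s c)| ≤ |c| := by
  classical
  have h1 : ∑ i, |coeff (m i) (monomial s c)|
      = ∑ i ∈ Finset.univ.filter (fun i => s = m i), |c| := by
    rw [Finset.sum_filter]
    refine Finset.sum_congr rfl fun i _ => ?_
    rw [coeff_monomial]
    split <;> simp
  rw [h1, Finset.sum_const, nsmul_eq_mul]
  have hcard : (Finset.univ.filter (fun i => s = m i)).card ≤ 1 := by
    refine Finset.card_le_one.2 fun x hx y hy => ?_
    simp only [Finset.mem_filter] at hx hy
    exact hm (hx.2.symm.trans hy.2)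
  calc ((Finset.univ.filter (fun i => s = m i)).card : ℝ) * |c|
      ≤ 1 * |c| := by
        exact mul_le_mul_of_nonneg_right (by exact_mod_cast hcard) (abs_nonneg c)
    _ = |c| := one_mul _

set_option maxHeartbeats 2000000 in
/-- Norm estimate for the Heston model: the matrix 1-norm (maximum absolute column sum) of
the matrix representation `G_n` of the Heston generator on `Pol_n(ℝ²)` in the monomial
basis is bounded by `n(r + κ + κθ - σ²/2) + (1/2) n² (1 + |ρ|σ/2 + σ²)`. -/
theorem stmt_15 (n : ℕ) (κ θ σ r ρ : ℝ)
    (hκ : 0 ≤ κ) (hθ : 0 ≤ θ) (hσ : 0 < σ) (hr : 0 ≤ r)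
    (hρ : ρ ∈ Set.Icc (-1 : ℝ) 1)
    (Amat : Fin 2 → Fin 2 → MvPolynomial (Fin 2) ℝ)
    (hAmat : Amat = ![![X 1, C (ρ * σ) * X 1], ![C (ρ * σ) * X 1, C (σ ^ 2) * X 1]])
    (bvec : Fin 2 → MvPolynomial (Fin 2) ℝ)
    (hbvec : bvec = ![C r - C (1 / 2 : ℝ) * X 1, C κ * (C θ - X 1)])
    (𝒢 : MvPolynomial (Fin 2) ℝ → MvPolynomial (Fin 2) ℝ)
    (h𝒢 : ∀ f, 𝒢 f =
      C (1 / 2 : ℝ) * ∑ i, ∑ j, Amat i j * pderiv i (pderiv j f) +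
        ∑ i, bvec i * pderiv i f)
    (Gmat : {k : Fin (n + 1) × Fin (n + 1) // (k.1 : ℕ) + (k.2 : ℕ) ≤ n} →
      {k : Fin (n + 1) × Fin (n + 1) // (k.1 : ℕ) + (k.2 : ℕ) ≤ n} → ℝ)
    (hGmat : ∀ i j, Gmat i j =
      coeff (Finsupp.single (0 : Fin 2) (i.1.1 : ℕ) + Finsupp.single (1 : Fin 2) (i.1.2 : ℕ))
        (𝒢 (X 0 ^ (j.1.1 : ℕ) * X 1 ^ (j.1.2 : ℕ)))) :
    ∀ j, ∑ i, |Gmat i j| ≤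
      (n : ℝ) * (r + κ + κ * θ - σ ^ 2 / 2) +
        (1 / 2) * (n : ℝ) ^ 2 * (1 + |ρ| * σ / 2 + σ ^ 2) := by
  intro j
  set a : ℕ := (j.1.1 : ℕ) with ha
  set b : ℕ := (j.1.2 : ℕ) with hb
  have hab : a + b ≤ n := j.2
  -- the family of row monomials
  set m : {k : Fin (n + 1) × Fin (n + 1) // (k.1 : ℕ) + (k.2 : ℕ) ≤ n} → (Fin 2 →₀ ℕ) :=
    fun i => Finsupp.single (0 : Fin 2) (i.1.1 : ℕ) + Finsupp.single (1 : Fin 2) (i.1.2 : ℕ)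
    with hmdef
  have hm : Function.Injective m := by
    intro x y h
    have h0 := DFunLike.congr_fun h (0 : Fin 2)
    have h1 := DFunLike.congr_fun h (1 : Fin 2)
    simp only [hmdef, Finsupp.add_apply, Finsupp.single_eq_same,
      Finsupp.single_eq_of_ne (by decide : (0:Fin 2) ≠ 1),
      Finsupp.single_eq_of_ne (by decide : (1:Fin 2) ≠ 0), add_zero, zero_add] at h0 h1
    refine Subtype.ext (Prod.ext (Fin.ext h0) (Fin.ext h1))
  -- compute the generator applied to the column monomial
  have hP : 𝒢 (X 0 ^ a * X 1 ^ b) =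
      (monomial ((Finsupp.single 1 1) + ((((Finsupp.single 0 a) + Finsupp.single 1 b) - Finsupp.single 0 1) - Finsupp.single 0 1)))
            (1 / 2 * ((a : ℝ) * ((a - 1 : ℕ) : ℝ))) +
          (monomial ((Finsupp.single 1 1) + ((((Finsupp.single 0 a) + Finsupp.single 1 b) - Finsupp.single 1 1) - Finsupp.single 0 1)))
            (1 / 2 * (ρ * σ * ((b : ℝ) * (a : ℝ)))) +
        ((monomial ((Finsupp.single 1 1) + ((((Finsupp.single 0 a) + Finsupp.single 1 b) - Finsupp.single 0 1) - Finsupp.single 1 1)))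
            (1 / 2 * (ρ * σ * ((a : ℝ) * (b : ℝ)))) +
          (monomial ((Finsupp.single 1 1) + ((((Finsupp.single 0 a) + Finsupp.single 1 b) - Finsupp.single 1 1) - Finsupp.single 1 1)))
            (1 / 2 * (σ ^ 2 * ((b : ℝ) * ((b - 1 : ℕ) : ℝ))))) +
      ((monomial (((Finsupp.single 0 a) + Finsupp.single 1 b) - Finsupp.single 0 1)) (r * (a : ℝ)) -
          (monomial ((Finsupp.single 1 1) + (((Finsupp.single 0 a) + Finsupp.single 1 b) - Finsupp.single 0 1))) (1 / 2 * (a : ℝ)) +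
        ((monomial (((Finsupp.single 0 a) + Finsupp.single 1 b) - Finsupp.single 1 1)) (κ * θ * (b : ℝ)) -
          (monomial ((Finsupp.single 1 1) + (((Finsupp.single 0 a) + Finsupp.single 1 b) - Finsupp.single 1 1))) (κ * (b : ℝ)))) := by
    rw [h𝒢, hAmat, hbvec]
    rw [show (X 0 ^ a * X 1 ^ b : MvPolynomial (Fin 2) ℝ) = monomial (Finsupp.single 0 a + Finsupp.single 1 b) 1 by
      rw [X_pow_eq_monomial, X_pow_eq_monomial, monomial_mul, one_mul]]
    rw [show (X 1 : MvPolynomial (Fin 2) ℝ) = monomial (Finsupp.single 1 1) 1 by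
      rw [← pow_one (X 1 : MvPolynomial (Fin 2) ℝ), X_pow_eq_monomial]]
    simp only [Fin.sum_univ_two, Matrix.cons_val_zero, Matrix.cons_val_one, Matrix.head_cons,
      Matrix.head_fin_const, pderiv_monomial, one_mul, ← C_mul, C_mul_monomial, mul_one, monomial_mul,
      sub_mul, add_mul, mul_sub, mul_add, Finsupp.add_apply, Finsupp.tsub_apply,
      Finsupp.single_eq_same, Finsupp.single_eq_of_ne (by decide : (0:Fin 2) ≠ 1),
      Finsupp.single_eq_of_ne (by decide : (1:Fin 2) ≠ 0), add_zero, zero_add, tsub_zero,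
      mul_zero, zero_mul]
  have hsum : ∑ i, |Gmat i j| = ∑ i, |coeff (m i) (𝒢 (X 0 ^ a * X 1 ^ b))| := by
    refine Finset.sum_congr rfl fun i _ => ?_
    rw [hGmat i j, ← ha, ← hb, hmdef]
  rw [hsum]
  have key : ∑ i, |coeff (m i) (𝒢 (X 0 ^ a * X 1 ^ b))| ≤
      |1 / 2 * ((a : ℝ) * ((a - 1 : ℕ) : ℝ))| + |1 / 2 * (ρ * σ * ((b : ℝ) * (a : ℝ)))| +
        (|1 / 2 * (ρ * σ * ((a : ℝ) * (b : ℝ)))| + |1 / 2 * (σ ^ 2 * ((b : ℝ) * ((b - 1 : ℕ) : ℝ)))|) +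
      ((|r * (a : ℝ)| + |1 / 2 * (a : ℝ)|) + (|κ * θ * (b : ℝ)| + |κ * (b : ℝ)|)) := by
    rw [hP]
    refine le_trans (colsum_add m _ _) (add_le_add ?_ ?_)
    · refine le_trans (colsum_add m _ _) (add_le_add ?_ ?_)
      · refine le_trans (colsum_add m _ _) (add_le_add ?_ ?_) <;>
          exact colsum_monomial m hm _ _
      · refine le_trans (colsum_add m _ _) (add_le_add ?_ ?_) <;>
          exact colsum_monomial m hm _ _
    · refine le_trans (colsum_add m _ _) (add_le_add ?_ ?_) <;>
      · refine le_trans (colsum_sub m _ _) (add_le_add ?_ ?_) <;>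
          exact colsum_monomial m hm _ _
  refine le_trans key ?_
  -- now pure real arithmetic
  have habs2 : |(1/2 : ℝ)| = 1/2 := abs_of_nonneg (by norm_num)
  simp only [abs_mul, habs2, Nat.abs_cast, abs_of_pos hσ, abs_of_nonneg hr,
    abs_of_nonneg hκ, abs_of_nonneg hθ, abs_pow]
  obtain ⟨hρ1, hρ2⟩ := hρ
  have hρa : |ρ| ≤ 1 := abs_le.2 ⟨hρ1, hρ2⟩
  have hA : (a : ℝ) ≤ n := by
    have : a ≤ n := le_trans (Nat.le_add_right a b) hab
    exact_mod_cast this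
  have hB : (b : ℝ) ≤ n := by
    have : b ≤ n := le_trans (Nat.le_add_left b a) hab
    exact_mod_cast this
  have hABn : (a : ℝ) + b ≤ n := by exact_mod_cast hab
  have h1 : (a : ℝ) * ((a - 1 : ℕ) : ℝ) + a ≤ (a : ℝ) ^ 2 := by
    have : a * (a - 1) + a ≤ a ^ 2 := by
      cases a with
      | zero => simp
      | succ k => simp [Nat.succ_sub_one]; nlinarith
    exact_mod_cast this
  have h2 : (b : ℝ) * ((b - 1 : ℕ) : ℝ) ≤ (n : ℝ) ^ 2 - n := by
    have hbn : b * (b - 1) ≤ n * (n - 1) :=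
      Nat.mul_le_mul (le_trans (Nat.le_add_left b a) hab)
        (Nat.sub_le_sub_right (le_trans (Nat.le_add_left b a) hab) 1)
    have hc : ((b * (b - 1) : ℕ) : ℝ) ≤ ((n * (n - 1) : ℕ) : ℝ) := by exact_mod_cast hbn
    have hcast : ((b * (b - 1) : ℕ) : ℝ) = (b : ℝ) * ((b - 1 : ℕ) : ℝ) := by push_cast; ring
    have hcast2 : ((n * (n - 1) : ℕ) : ℝ) ≤ (n : ℝ) ^ 2 - n := by
      cases n with
      | zero => simp
      | succ k => push_cast [Nat.succ_sub_one]; nlinarith [sq_nonneg ((k:ℝ))]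
    linarith [hcast ▸ hc]
  have h3 : 4 * ((a : ℝ) * b) ≤ (n : ℝ) ^ 2 := by
    nlinarith [sq_nonneg ((a : ℝ) - b), sq_nonneg ((a : ℝ) + b), Nat.cast_nonneg (α := ℝ) a,
      Nat.cast_nonneg (α := ℝ) b, hABn]
  have hA0 : (0:ℝ) ≤ a := Nat.cast_nonneg a
  have hB0 : (0:ℝ) ≤ b := Nat.cast_nonneg b
  have hρ0 : (0:ℝ) ≤ |ρ| := abs_nonneg ρ
  nlinarith [mul_le_mul_of_nonneg_left h3 (mul_nonneg hρ0 hσ.le),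
    mul_le_mul_of_nonneg_right hρa (mul_nonneg hσ.le (mul_nonneg hA0 hB0)),
    mul_le_mul_of_nonneg_left h2 (sq_nonneg σ),
    mul_le_mul_of_nonneg_left hA hr, mul_le_mul_of_nonneg_left hB hκ,
    mul_le_mul_of_nonneg_left hB (mul_nonneg hκ hθ),
    sq_nonneg σ, mul_nonneg hA0 hB0, mul_le_mul_of_nonneg_left h1 (le_of_lt one_half_pos),
    sq_le_sq' (by linarith : -(n:ℝ) ≤ (a:ℝ)) hA]
end
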